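/- arXiv:2106.13128 — 5 statements merged into one kernel-verified Lean document; each statement's English description precedes it below -/
import Mathlib

section
/- Let d ≥ 2 and let (X_i)_{i∈ℤ^d} be an orthomartingale difference random field with respect to a commuting filtration (F_i)_{i∈ℤ^d}. Fix n = (n_1,…,n_d) ∈ ℕ^d with n ≽ 1. For N ≥ 1 define M_N := max_{1≤i_q≤n_q, 1≤q≤d−1} |S_{(i_1,…,i_{d−1},N)}| and G_N := F_{(n_1,…,n_{d−1},N)}. Then (M_N)_{N≥1} is a submartingale with respect to the filtration (G_N)_{N≥1}, i.e. each M_N is integrable, G_N-measurable, and E[M_N | G_{N−1}] ≥ M_{N−1} a.s. for N ≥ 2. -/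
open MeasureTheory ProbabilityTheory

/-- `(F i)_{i ∈ ℤ^d}` is a commuting filtration on `(Ω, m0, μ)`:
each `F i` is a sub-σ-algebra, `F` is monotone for the coordinatewise order, and
conditional expectations with respect to the `F i` commute in the sense that
`E[E[Y | F i] | F j] = E[Y | F (min(i,j))]` a.s. for every integrable `Y`. -/
def CommutingFiltration {Ω : Type*} [m0 : MeasurableSpace Ω] (μ : Measure Ω)
    {d : ℕ} (F : (Fin d → ℤ) → MeasurableSpace Ω) : Prop :=
  (∀ i, F i ≤ m0) ∧
  (∀ i j : Fin d → ℤ, i ≤ j → F i ≤ F j) ∧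
  (∀ Y : Ω → ℝ, Integrable Y μ → ∀ i j : Fin d → ℤ,
    μ[(μ[Y | F i]) | F j] =ᵐ[μ] μ[Y | F (fun q => min (i q) (j q))])

/-- `(X i)_{i ∈ ℤ^d}` is an orthomartingale difference random field with respect to
the commuting filtration `(F i)`: each `X i` is integrable, `F i`-measurable, and
`E[X i | F (i - e q)] = 0` a.s. for every coordinate `q`. -/
def OrthomartingaleDiff {Ω : Type*} [m0 : MeasurableSpace Ω] (μ : Measure Ω)
    {d : ℕ} (F : (Fin d → ℤ) → MeasurableSpace Ω) (X : (Fin d → ℤ) → Ω → ℝ) : Prop :=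
  (∀ i, Integrable (X i) μ) ∧
  (∀ i, StronglyMeasurable[F i] (X i)) ∧
  (∀ (i : Fin d → ℤ) (q : Fin d), μ[X i | F (i - Pi.single q 1)] =ᵐ[μ] 0)

/-! Conditioning a rectangular sum `∑_{a ≼ j ≼ b} X_j` on `F_k` keeps exactly the terms with
`j ≼ k`. With `k = (n', N - 1)`, the corner of `G_{N-1}`, this gives
`E[S_{(i', N)} | G_{N-1}] = S_{(i', N-1)}` for every `i' ≼ n'`, and conditional Jensen for `|·|`
and for the maximum over `i'` turns it into `M_{N-1} ≤ E[M_N | G_{N-1}]`. -/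

open Finset

theorem Fin.snoc_inf_snoc {n : ℕ} {α : Type*} [Lattice α] (a b : Fin n → α) (x y : α) :
    (snoc a x ⊓ snoc b y : Fin (n + 1) → α) = snoc (a ⊓ b) (x ⊓ y) := by
  ext q
  refine lastCases ?_ (fun q => ?_) q <;> simp

theorem Fin.snoc_le_snoc {n : ℕ} {α : Type*} [Preorder α] {a b : Fin n → α} {x y : α}
    (hab : a ≤ b) (hxy : x ≤ y) : (snoc a x : Fin (n + 1) → α) ≤ snoc b y := by
  intro q
  refine lastCases ?_ (fun q => ?_) q
  · simpa using hxy
  · simpa using hab q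

theorem Finset.filter_Icc_le {α : Type*} [Lattice α] [LocallyFiniteOrder α] (a b k : α)
    [DecidablePred (· ≤ k)] : {j ∈ Icc a b | j ≤ k} = Icc a (b ⊓ k) := by
  ext j
  simp [and_assoc]

section SupOfFunctions

variable {Ω ι : Type*} {s : Finset ι} (hs : s.Nonempty) {f : ι → Ω → ℝ}

theorem Finset.stronglyMeasurable_sup' {m : MeasurableSpace Ω}
    (hf : ∀ i ∈ s, StronglyMeasurable[m] (f i)) : StronglyMeasurable[m] (s.sup' hs f) :=
  s.sup'_induction hs f (fun _ h₁ _ h₂ => h₁.sup h₂) hf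

theorem Finset.integrable_sup' {m0 : MeasurableSpace Ω} {μ : Measure Ω}
    (hf : ∀ i ∈ s, Integrable (f i) μ) : Integrable (s.sup' hs f) μ :=
  s.sup'_induction hs f (p := fun g => Integrable g μ) (fun _ h₁ _ h₂ => h₁.sup h₂) hf

theorem sup'_abs_ae_le_condExp_sup'_abs {m m0 : MeasurableSpace Ω} {μ : Measure Ω}
    {g : ι → Ω → ℝ} (hf : ∀ i ∈ s, Integrable (f i) μ)
    (hfg : ∀ i ∈ s, μ[f i | m] =ᵐ[μ] g i) :
    s.sup' hs (fun i => |g i|) ≤ᵐ[μ] μ[s.sup' hs (fun i => |f i|) | m] := by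
  have hsup : Integrable (s.sup' hs fun i => |f i|) μ :=
    Finset.integrable_sup' hs fun i hi => (hf i hi).abs
  have hle : ∀ i ∈ s, ∀ᵐ ω ∂μ, |g i ω| ≤ μ[s.sup' hs (fun i => |f i|) | m] ω := by
    intro i hi
    filter_upwards [hfg i hi, abs_condExp_ae_le_condExp_abs (m := m) (μ := μ) (f i),
      condExp_mono (m := m) (hf i hi).abs hsup
        (.of_forall (Finset.le_sup' (fun i => |f i|) hi))] with ω hfg habs hmono
    rw [← hfg]
    exact habs.trans hmono
  filter_upwards [(Filter.eventually_all_finset s).2 hle] with ω hω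
  rw [Finset.sup'_apply]
  exact Finset.sup'_le hs _ hω

end SupOfFunctions

section Orthomartingale

variable {Ω : Type*} [m0 : MeasurableSpace Ω] {μ : Measure Ω} {d : ℕ}
  {F : (Fin d → ℤ) → MeasurableSpace Ω} {X : (Fin d → ℤ) → Ω → ℝ}

theorem OrthomartingaleDiff.stronglyMeasurable_of_le (hF : CommutingFiltration μ F)
    (hX : OrthomartingaleDiff μ F X) {i k : Fin d → ℤ} (hik : i ≤ k) :
    StronglyMeasurable[F k] (X i) :=
  (hX.2.1 i).mono (hF.2.1 i k hik)

theorem OrthomartingaleDiff.stronglyMeasurable_sum_Icc (hF : CommutingFiltration μ F)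
    (hX : OrthomartingaleDiff μ F X) {a b k : Fin d → ℤ} (hbk : b ≤ k) :
    StronglyMeasurable[F k] (∑ j ∈ Icc a b, X j) :=
  Finset.stronglyMeasurable_sum _ fun _ hj =>
    hX.stronglyMeasurable_of_le hF ((Finset.mem_Icc.1 hj).2.trans hbk)

variable [IsFiniteMeasure μ]

/-- Commutation reduces `F k` to `F (i ⊓ k)`, which lies below `F (i - e q)`, where the
conditional expectation of `X i` vanishes by the orthomartingale property. -/
theorem OrthomartingaleDiff.condExp_eq_zero_of_lt (hF : CommutingFiltration μ F)
    (hX : OrthomartingaleDiff μ F X) {i k : Fin d → ℤ} {q : Fin d} (hq : k q < i q) :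
    μ[X i | F k] =ᵐ[μ] 0 := by
  have hmin : (fun p => min (i p) (k p)) ≤ i - Pi.single q 1 := by
    intro p
    by_cases hp : p = q
    · subst hp
      simp only [Pi.sub_apply, Pi.single_eq_same]
      omega
    · simp [Pi.single_eq_of_ne hp]
  calc μ[X i | F k] = μ[μ[X i | F i] | F k] := by
        rw [condExp_of_stronglyMeasurable (hF.1 i) (hX.2.1 i) (hX.1 i)]
    _ =ᵐ[μ] μ[X i | F (fun p => min (i p) (k p))] := hF.2.2 _ (hX.1 i) i k
    _ =ᵐ[μ] μ[μ[X i | F (i - Pi.single q 1)] | F (fun p => min (i p) (k p))] :=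
        (condExp_condExp_of_le (hF.2.1 _ _ hmin) (hF.1 _)).symm
    _ =ᵐ[μ] μ[0 | F (fun p => min (i p) (k p))] := condExp_congr_ae (hX.2.2 i q)
    _ = 0 := condExp_zero

theorem OrthomartingaleDiff.condExp_sum (hF : CommutingFiltration μ F)
    (hX : OrthomartingaleDiff μ F X) (s : Finset (Fin d → ℤ)) (k : Fin d → ℤ)
    [DecidablePred (· ≤ k)] :
    μ[∑ j ∈ s, X j | F k] =ᵐ[μ] ∑ j ∈ s with j ≤ k, X j := by
  rw [Finset.sum_filter]
  refine (condExp_finsetSum (fun j _ => hX.1 j) _).trans (eventuallyEq_sum fun j _ => ?_)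
  split_ifs with hjk
  · rw [condExp_of_stronglyMeasurable (hF.1 k) (hX.stronglyMeasurable_of_le hF hjk) (hX.1 j)]
  · obtain ⟨q, hq⟩ : ∃ q, k q < j q := by simpa [Pi.le_def] using hjk
    exact hX.condExp_eq_zero_of_lt hF hq

theorem OrthomartingaleDiff.condExp_sum_Icc (hF : CommutingFiltration μ F)
    (hX : OrthomartingaleDiff μ F X) (a b k : Fin d → ℤ) :
    μ[∑ j ∈ Icc a b, X j | F k] =ᵐ[μ] ∑ j ∈ Icc a (b ⊓ k), X j := by
  classical
  rw [← Finset.filter_Icc_le]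
  exact hX.condExp_sum hF _ k

end Orthomartingale

theorem max_partial_sums_submartingale_general (e : ℕ)
    {Ω : Type*} {m0 : MeasurableSpace Ω} (μ : Measure Ω) [IsProbabilityMeasure μ]
    (F : (Fin (e + 1) → ℤ) → MeasurableSpace Ω) (X : (Fin (e + 1) → ℤ) → Ω → ℝ)
    (hF : CommutingFiltration μ F) (hX : OrthomartingaleDiff μ F X)
    (n : Fin (e + 1) → ℤ) (hn : (1 : Fin (e + 1) → ℤ) ≤ n)
    (M : ℤ → Ω → ℝ)
    (hM : ∀ (N : ℤ) (ω : Ω), M N ω =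
      (Finset.Icc (1 : Fin e → ℤ) (Fin.init n)).sup'
        (Finset.nonempty_Icc.mpr (fun q => hn q.castSucc))
        (fun i' => |∑ j ∈ Finset.Icc 1 (Fin.snoc i' N : Fin (e + 1) → ℤ), X j ω|))
    (G : ℤ → MeasurableSpace Ω)
    (hG : ∀ N : ℤ, G N = F (Fin.snoc (Fin.init n) N)) :
    (∀ N : ℤ, 1 ≤ N → Integrable (M N) μ) ∧
    (∀ N : ℤ, 1 ≤ N → StronglyMeasurable[G N] (M N)) ∧
    (∀ N : ℤ, 2 ≤ N → M (N - 1) ≤ᵐ[μ] μ[M N | G (N - 1)]) := by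
  set I := Finset.Icc (1 : Fin e → ℤ) (Fin.init n)
  have hI : I.Nonempty := Finset.nonempty_Icc.mpr fun q => hn q.castSucc
  have hM' (N : ℤ) : M N = I.sup' hI fun i' => |∑ j ∈ Icc 1 (Fin.snoc i' N), X j| := by
    ext ω
    simp only [Finset.sup'_apply, Pi.abs_apply, Finset.sum_apply]
    exact hM N ω
  have hS (b : Fin (e + 1) → ℤ) : Integrable (∑ j ∈ Icc 1 b, X j) μ :=
    integrable_finsetSum' _ fun j _ => hX.1 j
  refine ⟨fun N _ => ?_, fun N _ => ?_, fun N _ => ?_⟩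
  · rw [hM']
    exact Finset.integrable_sup' hI fun i' _ => (hS _).abs
  · rw [hM', hG]
    refine Finset.stronglyMeasurable_sup' hI fun i' hi' =>
      continuous_abs.comp_stronglyMeasurable (hX.stronglyMeasurable_sum_Icc hF ?_)
    exact Fin.snoc_le_snoc (Finset.mem_Icc.1 hi').2 le_rfl
  · rw [hM', hM', hG]
    refine sup'_abs_ae_le_condExp_sup'_abs hI (fun i' _ => hS _) fun i' hi' => ?_
    have hcorner : (Fin.snoc i' N ⊓ Fin.snoc (Fin.init n) (N - 1) : Fin (e + 1) → ℤ) =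
        Fin.snoc i' (N - 1) := by
      rw [Fin.snoc_inf_snoc, inf_eq_left.2 (Finset.mem_Icc.1 hi').2, inf_eq_right.2 (by omega)]
    simpa only [hcorner] using
      hX.condExp_sum_Icc hF 1 (Fin.snoc i' N) (Fin.snoc (Fin.init n) (N - 1))

/-- Let `d = e + 1 ≥ 2` and let `(X_i)_{i∈ℤ^d}` be an orthomartingale difference
random field with respect to a commuting filtration `(F_i)`. Fix `n ≽ 1` and set,
for `N ≥ 1`, `M_N = max_{1≤i_q≤n_q, q<d} |S_{(i_1,…,i_{d-1},N)}|` and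
`G_N = F_{(n_1,…,n_{d-1},N)}`. Then `(M_N)_{N≥1}` is a submartingale with respect
to `(G_N)_{N≥1}`: each `M_N` is integrable and `G_N`-measurable, and
`E[M_N | G_{N-1}] ≥ M_{N-1}` a.s. for `N ≥ 2`. -/
theorem max_partial_sums_submartingale (e : ℕ) (he : 1 ≤ e)
    {Ω : Type*} {m0 : MeasurableSpace Ω} (μ : Measure Ω) [IsProbabilityMeasure μ]
    (F : (Fin (e + 1) → ℤ) → MeasurableSpace Ω) (X : (Fin (e + 1) → ℤ) → Ω → ℝ)
    (hF : CommutingFiltration μ F) (hX : OrthomartingaleDiff μ F X)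
    (n : Fin (e + 1) → ℤ) (hn : (1 : Fin (e + 1) → ℤ) ≤ n)
    (M : ℤ → Ω → ℝ)
    (hM : ∀ (N : ℤ) (ω : Ω), M N ω =
      (Finset.Icc (1 : Fin e → ℤ) (Fin.init n)).sup'
        (Finset.nonempty_Icc.mpr (fun q => hn q.castSucc))
        (fun i' => |∑ j ∈ Finset.Icc 1 (Fin.snoc i' N : Fin (e + 1) → ℤ), X j ω|))
    (G : ℤ → MeasurableSpace Ω)
    (hG : ∀ N : ℤ, G N = F (Fin.snoc (Fin.init n) N)) :
    (∀ N : ℤ, 1 ≤ N → Integrable (M N) μ) ∧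
    (∀ N : ℤ, 1 ≤ N → StronglyMeasurable[G N] (M N)) ∧
    (∀ N : ℤ, 2 ≤ N → M (N - 1) ≤ᵐ[μ] μ[M N | G (N - 1)]) :=
  max_partial_sums_submartingale_general e (m0 := m0) μ F X hF hX n hn M hM G hG
end

section
/- Let L : (0,∞) → (0,∞) be a measurable slowly varying function, i.e. for every c > 0, L(ct)/L(t) → 1 as t → ∞. Then there exists a constant C_L > 0 such that for every integer k ≥ 1, Σ_{j=1}^k 2^j / L(2^j) ≤ C_L · 2^k / L(2^k). -/
/-!
Setting `a j = 2 ^ j / L (2 ^ j)`, slow variation gives `L (2 t) ≤ (3/2) L t` for large `t`, hence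
`a j ≤ (3/4) a (j + 1)` for large `j`: the sequence eventually grows geometrically. For such a
sequence the normalised partial sums `bₖ = (∑_{j ≤ k} a j) / a k` satisfy `b (k+1) ≤ (3/4) bₖ + 1`
eventually, so they are bounded.
-/

open Filter Finset

theorem bddAbove_range_of_eventually_le_mul_add_one {b : ℕ → ℝ} {r : ℝ} (hr₀ : 0 ≤ r)
    (hr : r < 1) (h : ∀ᶠ k in atTop, b (k + 1) ≤ r * b k + 1) : BddAbove (Set.range b) := by
  obtain ⟨N, hN⟩ := eventually_atTop.mp h
  set M := max (b N) (1 / (1 - r))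
  have hM : r * M + 1 ≤ M := by
    have : 1 ≤ (1 - r) * M := by
      rw [← div_le_iff₀' (by linarith)]
      exact le_max_right _ _
    linarith
  have hbM : ∀ k ≥ N, b k ≤ M := by
    intro k hk
    induction k, hk using Nat.le_induction with
    | base => exact le_max_left _ _
    | succ k hk ih => linarith [hN k hk, mul_le_mul_of_nonneg_left ih hr₀]
  exact (isBoundedUnder_of_eventually_le (eventually_atTop.mpr ⟨N, hbM⟩)).bddAbove_range

theorem sum_range_succ_div_le_mul_add_one {a : ℕ → ℝ} (ha : ∀ j, 0 < a j) {r : ℝ} {k : ℕ}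
    (hk : a k ≤ r * a (k + 1)) :
    (∑ j ∈ range (k + 2), a j) / a (k + 1) ≤ r * ((∑ j ∈ range (k + 1), a j) / a k) + 1 := by
  have hS : 0 ≤ ∑ j ∈ range (k + 1), a j := sum_nonneg fun j _ => (ha j).le
  rw [sum_range_succ _ (k + 1), add_div, div_self (ha (k + 1)).ne']
  gcongr
  rw [div_le_iff₀ (ha _), mul_div_assoc', div_mul_eq_mul_div, le_div_iff₀ (ha _)]
  nlinarith

theorem exists_sum_range_le_mul_of_eventually_le_mul_succ {a : ℕ → ℝ} (ha : ∀ j, 0 < a j)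
    {r : ℝ} (hr₀ : 0 ≤ r) (hr : r < 1) (h : ∀ᶠ j in atTop, a j ≤ r * a (j + 1)) :
    ∃ C, 0 < C ∧ ∀ k, ∑ j ∈ range (k + 1), a j ≤ C * a k := by
  obtain ⟨C, hC⟩ := bddAbove_range_of_eventually_le_mul_add_one
    (b := fun k => (∑ j ∈ range (k + 1), a j) / a k) hr₀ hr
    (h.mono fun k hk => sum_range_succ_div_le_mul_add_one ha hk)
  refine ⟨C, ?_, fun k => (div_le_iff₀ (ha k)).mp (hC ⟨k, rfl⟩)⟩
  have h0 := hC ⟨0, rfl⟩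
  simp only [zero_add, sum_range_one, div_self (ha 0).ne'] at h0
  linarith

theorem eventually_two_pow_div_le_mul_succ {L : ℝ → ℝ} (hLpos : ∀ t : ℝ, 0 < t → 0 < L t)
    (hL : Tendsto (fun t : ℝ => L (2 * t) / L t) atTop (nhds 1)) :
    ∀ᶠ j : ℕ in atTop, (2 : ℝ) ^ j / L (2 ^ j) ≤ 3 / 4 * ((2 : ℝ) ^ (j + 1) / L (2 ^ (j + 1))) := by
  have hlt : ∀ᶠ j : ℕ in atTop, L (2 * 2 ^ j) / L (2 ^ j) < 3 / 2 :=
    (tendsto_pow_atTop_atTop_of_one_lt one_lt_two).eventually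
      (hL.eventually_lt_const (by norm_num))
  filter_upwards [hlt] with j hj
  have hpow : (0 : ℝ) < 2 ^ j := by positivity
  have hLj := hLpos _ hpow
  have hLj' := hLpos _ (by positivity : (0 : ℝ) < 2 * 2 ^ j)
  rw [div_lt_iff₀ hLj] at hj
  rw [pow_succ', ← mul_div_assoc, div_le_div_iff₀ hLj hLj']
  nlinarith

theorem slowly_varying_geometric_sum_bound_general (L : ℝ → ℝ)
    (hLpos : ∀ t : ℝ, 0 < t → 0 < L t)
    (hslow : ∀ c : ℝ, 0 < c →
      Filter.Tendsto (fun t : ℝ => L (c * t) / L t) Filter.atTop (nhds 1)) :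
    ∃ C : ℝ, 0 < C ∧ ∀ k : ℕ, 1 ≤ k →
      ∑ j ∈ Finset.Icc 1 k, (2 : ℝ) ^ j / L (2 ^ j) ≤ C * ((2 : ℝ) ^ k / L (2 ^ k)) := by
  have ha : ∀ j : ℕ, 0 < (2 : ℝ) ^ j / L (2 ^ j) := fun j =>
    div_pos (by positivity) (hLpos _ (by positivity))
  obtain ⟨C, hC, hsum⟩ := exists_sum_range_le_mul_of_eventually_le_mul_succ ha (by norm_num)
    (by norm_num) (eventually_two_pow_div_le_mul_succ hLpos (hslow 2 two_pos))
  refine ⟨C, hC, fun k _ => le_trans ?_ (hsum k)⟩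
  rw [Nat.range_succ_eq_Icc_zero]
  exact sum_le_sum_of_subset_of_nonneg (Icc_subset_Icc_left zero_le_one) fun j _ _ => (ha j).le

/-- If `L : (0,∞) → (0,∞)` is a measurable slowly varying function, then there is a
constant `C_L > 0` such that for every `k ≥ 1`,
`∑_{j=1}^k 2^j / L(2^j) ≤ C_L · 2^k / L(2^k)`. -/
theorem slowly_varying_geometric_sum_bound (L : ℝ → ℝ) (hLmeas : Measurable L)
    (hLpos : ∀ t : ℝ, 0 < t → 0 < L t)
    (hslow : ∀ c : ℝ, 0 < c →
      Filter.Tendsto (fun t : ℝ => L (c * t) / L t) Filter.atTop (nhds 1)) :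
    ∃ C : ℝ, 0 < C ∧ ∀ k : ℕ, 1 ≤ k →
      ∑ j ∈ Finset.Icc 1 k, (2 : ℝ) ^ j / L (2 ^ j) ≤ C * ((2 : ℝ) ^ k / L (2 ^ k)) :=
  slowly_varying_geometric_sum_bound_general L hLpos hslow
end

section
/- Let X be a nonnegative random variable and let L : (0,∞) → (0,∞) be a measurable, nondecreasing slowly varying function with L(x) → ∞ as x → ∞. Suppose that for every A > 0, Σ_{j≥1} 2^j P( X > L(2^j) A ) < ∞. Then for every C > 0, Σ_{j≥1} 2^j ∫_1^∞ P( X > L(2^j) u C ) u² du < ∞. -/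
/-!
Slow variation makes `L(2^{j+4k+1}) ≤ D 2^k L(2^{j+1})` for some constant `D`.
Splitting `(1, ∞)` into the dyadic blocks `[2^k, 2^{k+1})`, the `j`-th integral is at most
`∑_k 2^{3k+2} P(X > L(2^{j+1}) 2^k C)`, and this threshold dominates `L(2^{j+4k+1}) C / D`.
So the `(j, k)` term is at most `4 · 2^{-k}` times the `(j + 4k)`-th term of the hypothesis series
with `A = C / D`, and the geometric factor makes the double series converge.
-/

open MeasureTheory Filter Set Topology
open scoped ENNReal

theorem Monotone.exists_le_mul_pow_of_eventually_succ_le {a : ℕ → ℝ} (ha : Monotone a)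
    (h0 : 0 < a 0) {q : ℝ} (hq : 0 ≤ q) (hev : ∀ᶠ n in atTop, a (n + 1) ≤ q * a n) :
    ∃ D > 0, ∀ j n, a (j + n) ≤ D * q ^ n * a j := by
  obtain ⟨N, hN⟩ := eventually_atTop.1 hev
  have hpos : ∀ n, 0 < a n := fun n => h0.trans_le (ha (Nat.zero_le n))
  have hgrowth : ∀ j, N ≤ j → ∀ n, a (j + n) ≤ q ^ n * a j := by
    intro j hj n
    induction n with
    | zero => simp
    | succ n ih =>
      calc a (j + (n + 1)) ≤ q * a (j + n) := hN _ (hj.trans (Nat.le_add_right j n))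
        _ ≤ q * (q ^ n * a j) := by gcongr
        _ = q ^ (n + 1) * a j := by ring
  have hmax : ∀ j, a (max j N) ≤ a N / a 0 * a j := by
    intro j
    rw [div_mul_eq_mul_div, le_div_iff₀ h0]
    rcases le_total j N with hjN | hNj
    · rw [max_eq_right hjN]
      exact mul_le_mul_of_nonneg_left (ha (Nat.zero_le j)) (hpos N).le
    · rw [max_eq_left hNj, mul_comm]
      exact mul_le_mul_of_nonneg_right (ha (Nat.zero_le N)) (hpos j).le
  refine ⟨a N / a 0, div_pos (hpos N) h0, fun j n => ?_⟩
  calc a (j + n) ≤ a (max j N + n) := ha (by omega)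
    _ ≤ q ^ n * a (max j N) := hgrowth _ (le_max_right _ _) n
    _ ≤ q ^ n * (a N / a 0 * a j) := by gcongr; exact hmax j
    _ = a N / a 0 * q ^ n * a j := by ring

theorem Monotone.exists_le_mul_two_pow_of_tendsto_div {a : ℕ → ℝ} (ha : Monotone a)
    (h0 : 0 < a 0) (hratio : Tendsto (fun n => a (n + 1) / a n) atTop (𝓝 1)) :
    ∃ D > 0, ∀ j k, a (j + 4 * k) ≤ D * 2 ^ k * a j := by
  have hpos : ∀ n, 0 < a n := fun n => h0.trans_le (ha (Nat.zero_le n))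
  have hev : ∀ᶠ n in atTop, a (n + 1) ≤ 1.1 * a n := by
    filter_upwards [hratio.eventually (gt_mem_nhds (by norm_num : (1 : ℝ) < 1.1))] with n hn
    exact (div_le_iff₀ (hpos n)).1 hn.le
  obtain ⟨D, hD, hle⟩ := ha.exists_le_mul_pow_of_eventually_succ_le h0 (by norm_num) hev
  refine ⟨D, hD, fun j k => (hle j (4 * k)).trans ?_⟩
  have hq : (1.1 : ℝ) ^ (4 * k) ≤ 2 ^ k := by
    rw [pow_mul]
    exact pow_le_pow_left₀ (by norm_num) (by norm_num) k
  gcongr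
  exact (hpos j).le

theorem lintegral_Ioi_one_mul_sq_le_tsum {f : ℝ → ℝ≥0∞} (hf : Antitone f) :
    ∫⁻ u in Ioi 1, f u * ENNReal.ofReal (u ^ 2) ≤
      ∑' k : ℕ, 2 ^ (3 * k + 2) * f (2 ^ k) := by
  have hcover : Ioi (1 : ℝ) ⊆ ⋃ k : ℕ, Ico (2 ^ k) (2 ^ (k + 1)) := fun u hu =>
    mem_iUnion.2 (exists_nat_pow_near (le_of_lt hu) one_lt_two)
  have hblock : ∀ k : ℕ, ∀ u ∈ Ico ((2 : ℝ) ^ k) (2 ^ (k + 1)),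
      f u * ENNReal.ofReal (u ^ 2) ≤ f (2 ^ k) * 2 ^ (2 * k + 2) := by
    rintro k u ⟨hlo, hhi⟩
    gcongr
    · exact hf hlo
    · rw [show (2 : ℝ≥0∞) ^ (2 * k + 2) = ENNReal.ofReal ((2 ^ (k + 1)) ^ 2) by
        rw [ENNReal.ofReal_pow (by positivity), ENNReal.ofReal_pow zero_le_two]; norm_num; ring]
      gcongr
      exact (by positivity : (0 : ℝ) < 2 ^ k).le.trans hlo
  calc ∫⁻ u in Ioi 1, f u * ENNReal.ofReal (u ^ 2)
      ≤ ∫⁻ u in ⋃ k : ℕ, Ico ((2 : ℝ) ^ k) (2 ^ (k + 1)),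
          f u * ENNReal.ofReal (u ^ 2) :=
        lintegral_mono_set hcover
    _ ≤ ∑' k : ℕ, ∫⁻ u in Ico ((2 : ℝ) ^ k) (2 ^ (k + 1)),
          f u * ENNReal.ofReal (u ^ 2) :=
        lintegral_iUnion_le _ _
    _ ≤ ∑' k : ℕ, ∫⁻ _ in Ico ((2 : ℝ) ^ k) (2 ^ (k + 1)),
          f (2 ^ k) * 2 ^ (2 * k + 2) :=
        ENNReal.tsum_le_tsum fun k => setLIntegral_mono measurable_const (hblock k)
    _ = ∑' k : ℕ, 2 ^ (3 * k + 2) * f (2 ^ k) := by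
        congr 1 with k
        rw [setLIntegral_const, Real.volume_Ico,
          show (2 : ℝ) ^ (k + 1) - 2 ^ k = 2 ^ k by ring,
          ENNReal.ofReal_pow zero_le_two, ENNReal.ofReal_ofNat]
        ring

theorem ENNReal.tsum_tsum_le_two_mul_tsum_of_two_pow_mul_le {c : ℕ → ℕ → ℝ≥0∞}
    {b : ℕ → ℝ≥0∞} (n : ℕ → ℕ) (h : ∀ j k, 2 ^ k * c j k ≤ b (j + n k)) :
    ∑' j, ∑' k, c j k ≤ 2 * ∑' m, b m := by
  have hc : ∀ j k, c j k ≤ 2⁻¹ ^ k * b (j + n k) := fun j k => by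
    calc c j k = 2⁻¹ ^ k * (2 ^ k * c j k) := by
          rw [← mul_assoc, ← mul_pow, ENNReal.inv_mul_cancel two_ne_zero ofNat_ne_top,
            one_pow, one_mul]
      _ ≤ 2⁻¹ ^ k * b (j + n k) := by gcongr; exact h j k
  calc ∑' j, ∑' k, c j k ≤ ∑' j, ∑' k, 2⁻¹ ^ k * b (j + n k) :=
        ENNReal.tsum_le_tsum fun j => ENNReal.tsum_le_tsum fun k => hc j k
    _ = ∑' k, 2⁻¹ ^ k * ∑' j, b (j + n k) := by
        rw [ENNReal.tsum_comm]; simp_rw [ENNReal.tsum_mul_left]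
    _ ≤ ∑' k, 2⁻¹ ^ k * ∑' m, b m :=
        ENNReal.tsum_le_tsum fun k => mul_le_mul_right
          (ENNReal.tsum_comp_le_tsum_of_injective (add_left_injective (n k)) b) _
    _ = 2 * ∑' m, b m := by
        rw [ENNReal.tsum_mul_right, ENNReal.tsum_geometric, ENNReal.one_sub_inv_two, inv_inv]

section TailProbability

variable {Ω : Type*} [MeasurableSpace Ω] (μ : Measure Ω) (X : Ω → ℝ)

theorem antitone_measure_setOf_mul_mul_lt {a b : ℝ} (ha : 0 ≤ a) (hb : 0 ≤ b) :
    Antitone fun u => μ {ω | a * u * b < X ω} := fun u v huv =>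
  measure_mono fun ω (hω : a * v * b < X ω) => lt_of_le_of_lt (by gcongr : a * u * b ≤ _) hω

theorem two_pow_mul_measure_setOf_lt_le {a : ℕ → ℝ} {C D : ℝ} (hC : 0 ≤ C) (hD : 0 < D)
    (ha : ∀ j k, a (j + 4 * k) ≤ D * 2 ^ k * a j) (j k : ℕ) :
    2 ^ k * (2 ^ (j + 1) * (2 ^ (3 * k + 2) * μ {ω | a j * 2 ^ k * C < X ω})) ≤
      4 * (2 ^ (j + 4 * k + 1) * μ {ω | a (j + 4 * k) * (C / D) < X ω}) := by
  have hthreshold : a (j + 4 * k) * (C / D) ≤ a j * 2 ^ k * C := by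
    calc a (j + 4 * k) * (C / D) ≤ D * 2 ^ k * a j * (C / D) := by gcongr; exact ha j k
      _ = a j * 2 ^ k * C := by field_simp
  calc _ = 4 * (2 ^ (j + 4 * k + 1) * μ {ω | a j * 2 ^ k * C < X ω}) := by ring
    _ ≤ _ := mul_le_mul_right (mul_le_mul_right
        (measure_mono fun ω (hω : _ < X ω) => hthreshold.trans_lt hω) _) _

end TailProbability

theorem slowly_varying_tail_series_integral_general
    {Ω : Type*} {m0 : MeasurableSpace Ω} (μ : Measure Ω)
    (X : Ω → ℝ)
    (L : ℝ → ℝ)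
    (hLpos : ∀ t : ℝ, 0 < t → 0 < L t)
    (hLmono : MonotoneOn L (Set.Ioi (0 : ℝ)))
    (hslow : ∀ c : ℝ, 0 < c →
      Filter.Tendsto (fun t : ℝ => L (c * t) / L t) Filter.atTop (nhds 1))
    (hsum : ∀ A : ℝ, 0 < A →
      (∑' j : ℕ, (2 : ℝ≥0∞) ^ (j + 1) *
        μ {ω | L (2 ^ (j + 1)) * A < X ω}) ≠ ⊤) :
    ∀ C : ℝ, 0 < C →
      (∑' j : ℕ, (2 : ℝ≥0∞) ^ (j + 1) *
        ∫⁻ u in Set.Ioi (1 : ℝ),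
          μ {ω | L (2 ^ (j + 1)) * u * C < X ω} * ENNReal.ofReal (u ^ 2)) ≠ ⊤ := by
  intro C hC
  have hmono : Monotone fun j : ℕ => L (2 ^ (j + 1)) := fun i j hij =>
    hLmono (mem_Ioi.2 (by positivity)) (mem_Ioi.2 (by positivity))
      (pow_le_pow_right₀ one_le_two (by omega))
  have hratio : Tendsto (fun n : ℕ => L (2 ^ (n + 1 + 1)) / L (2 ^ (n + 1))) atTop (𝓝 1) := by
    simp_rw [pow_succ' (2 : ℝ) (_ + 1)]
    exact (hslow 2 two_pos).comp
      ((tendsto_pow_atTop_atTop_of_one_lt one_lt_two).comp (tendsto_add_atTop_nat 1))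
  obtain ⟨D, hD, hL⟩ :=
    hmono.exists_le_mul_two_pow_of_tendsto_div (hLpos _ (by positivity)) hratio
  refine ne_top_of_le_ne_top (b := 2 * ∑' m : ℕ, 4 * (2 ^ (m + 1) *
    μ {ω | L (2 ^ (m + 1)) * (C / D) < X ω})) ?_ ?_
  · rw [ENNReal.tsum_mul_left]
    exact ENNReal.mul_ne_top ENNReal.ofNat_ne_top
      (ENNReal.mul_ne_top ENNReal.ofNat_ne_top (hsum _ (by positivity)))
  calc _ ≤ ∑' j : ℕ, 2 ^ (j + 1) * ∑' k : ℕ, 2 ^ (3 * k + 2) *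
        μ {ω | L (2 ^ (j + 1)) * 2 ^ k * C < X ω} := by
        gcongr with j
        exact lintegral_Ioi_one_mul_sq_le_tsum
          (antitone_measure_setOf_mul_mul_lt μ X (hLpos _ (by positivity)).le hC.le)
    _ = ∑' j : ℕ, ∑' k : ℕ, 2 ^ (j + 1) * (2 ^ (3 * k + 2) *
        μ {ω | L (2 ^ (j + 1)) * 2 ^ k * C < X ω}) := by simp_rw [ENNReal.tsum_mul_left]
    _ ≤ _ := ENNReal.tsum_tsum_le_two_mul_tsum_of_two_pow_mul_le (fun k => 4 * k)
        (two_pow_mul_measure_setOf_lt_le μ X (a := fun j => L (2 ^ (j + 1))) hC.le hD hL)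

/-- Let `X ≥ 0` be a random variable and `L : (0,∞) → (0,∞)` a measurable,
nondecreasing slowly varying function with `L(x) → ∞`. If for every `A > 0`,
`∑_{j≥1} 2^j P(X > L(2^j) A) < ∞`, then for every `C > 0`,
`∑_{j≥1} 2^j ∫_1^∞ P(X > L(2^j) u C) u² du < ∞`. -/
theorem slowly_varying_tail_series_integral
    {Ω : Type*} {m0 : MeasurableSpace Ω} (μ : Measure Ω) [IsProbabilityMeasure μ]
    (X : Ω → ℝ) (hXnonneg : ∀ ω, 0 ≤ X ω) (hXmeas : Measurable X)
    (L : ℝ → ℝ) (hLmeas : Measurable L)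
    (hLpos : ∀ t : ℝ, 0 < t → 0 < L t)
    (hLmono : MonotoneOn L (Set.Ioi (0 : ℝ)))
    (hLtop : Filter.Tendsto L Filter.atTop Filter.atTop)
    (hslow : ∀ c : ℝ, 0 < c →
      Filter.Tendsto (fun t : ℝ => L (c * t) / L t) Filter.atTop (nhds 1))
    (hsum : ∀ A : ℝ, 0 < A →
      (∑' j : ℕ, (2 : ℝ≥0∞) ^ (j + 1) *
        μ {ω | L (2 ^ (j + 1)) * A < X ω}) ≠ ⊤) :
    ∀ C : ℝ, 0 < C →
      (∑' j : ℕ, (2 : ℝ≥0∞) ^ (j + 1) *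
        ∫⁻ u in Set.Ioi (1 : ℝ),
          μ {ω | L (2 ^ (j + 1)) * u * C < X ω} * ENNReal.ofReal (u ^ 2)) ≠ ⊤ :=
  slowly_varying_tail_series_integral_general (m0 := m0) μ X L hLpos hLmono hslow hsum
end

section
/- Let d ≥ 2 be an integer and for q > 0 define f_q(t) := t (1 + 2 ln t)^{−q} for t ≥ 1. Then there exists a constant K > 0 such that for every t ≥ 1, ∫_1^∞ ∫_1^∞ [ v (log(1+v))^{2(d−1)} / ( f_{d/2}(u) f_{1/2}(v) )² ] · 1{ t > f_{d/2}(u) f_{1/2}(v) } du dv ≤ K ( log(1+t) )^{2d}. -/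
/-!
Where `f_{d/2}(u) f_{1/2}(v) < t`, the integrand factorises as
`(1 + 2 ln u)^d / u² · (ln (1 + v))^{2(d-1)} (1 + 2 ln v) / v`.
Since `ln u ≤ u^ε / ε`, `f_{d/2}` is bounded below by a positive constant, and
`f_{1/2}(v)² ≥ v / 2`; so the region forces `v < V` with `V ≍ t²`. The `u`-factor is
`O(u^{-3/2})`, hence integrable on `(1, ∞)`, while the `v`-factor integrates over `(1, V)`
to at most `(1 + 2 ln (1 + V))^{2d-1} ln V = O((ln (1 + t))^{2d})`.
-/

open scoped ENNReal

/-- The auxiliary function `f_q(t) = t (1 + 2 ln t)^{-q}`. -/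
noncomputable def fAux (q t : ℝ) : ℝ := t * (1 + 2 * Real.log t) ^ (-q)

open Real MeasureTheory Set

section LogBounds

variable {u : ℝ}

lemma one_le_one_add_two_log (hu : 1 ≤ u) : 1 ≤ 1 + 2 * log u := by
  linarith [log_nonneg hu]

lemma one_add_two_log_le_mul_rpow {ε : ℝ} (hε : 0 < ε) (hu : 1 ≤ u) :
    1 + 2 * log u ≤ (1 + 2 / ε) * u ^ ε := by
  have hlog : log u ≤ u ^ ε / ε := log_le_rpow_div (by linarith) hε
  have hone : 1 ≤ u ^ ε := one_le_rpow hu hε.le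
  have hsplit : (1 + 2 / ε) * u ^ ε = u ^ ε + 2 * (u ^ ε / ε) := by ring
  linarith

lemma one_add_two_log_rpow_le {q ε : ℝ} (hq : 0 ≤ q) (hε : 0 < ε) (hu : 1 ≤ u) :
    (1 + 2 * log u) ^ q ≤ (1 + 2 / ε) ^ q * u ^ (ε * q) := by
  rw [rpow_mul (by linarith), ← mul_rpow (by positivity) (by positivity)]
  exact rpow_le_rpow (by linarith [one_le_one_add_two_log hu])
    (one_add_two_log_le_mul_rpow hε hu) hq

end LogBounds

section fAux

variable {q u : ℝ}

lemma fAux_pos (q : ℝ) (hu : 1 ≤ u) : 0 < fAux q u :=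
  mul_pos (by linarith) (rpow_pos_of_pos (by linarith [one_le_one_add_two_log hu]) _)

lemma fAux_sq (q : ℝ) (hu : 1 ≤ u) : fAux q u ^ 2 = u ^ 2 / (1 + 2 * log u) ^ (2 * q) := by
  have hb : 0 < 1 + 2 * log u := by linarith [one_le_one_add_two_log hu]
  rw [fAux, mul_pow, ← rpow_mul_natCast hb.le, show -q * ((2 : ℕ) : ℝ) = -(2 * q) by
    push_cast; ring, rpow_neg hb.le, div_eq_mul_inv]

lemma rpow_neg_le_fAux (hq : 0 ≤ q) (hu : 1 ≤ u) : (3 + 2 * q) ^ (-q) ≤ fAux q u := by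
  have hb : 0 < 1 + 2 * log u := by linarith [one_le_one_add_two_log hu]
  have hε : 0 < 1 / (q + 1) := by positivity
  have hgrowth : (1 + 2 * log u) ^ q ≤ (3 + 2 * q) ^ q * u := by
    calc (1 + 2 * log u) ^ q ≤ (1 + 2 / (1 / (q + 1))) ^ q * u ^ (1 / (q + 1) * q) :=
          one_add_two_log_rpow_le hq hε hu
      _ ≤ (3 + 2 * q) ^ q * u ^ (1 : ℝ) := by
          rw [show 1 + 2 / (1 / (q + 1)) = 3 + 2 * q by field_simp; ring]
          gcongr
          rw [div_mul_eq_mul_div, one_mul, div_le_one (by linarith)]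
          linarith
      _ = (3 + 2 * q) ^ q * u := by rw [rpow_one]
  rw [fAux, rpow_neg hb.le, rpow_neg (by linarith), ← div_eq_mul_inv,
    le_div_iff₀ (rpow_pos_of_pos hb _), inv_mul_le_iff₀ (by positivity)]
  exact hgrowth

lemma le_two_mul_fAux_half_sq {v : ℝ} (hv : 1 ≤ v) : v ≤ 2 * fAux (1 / 2) v ^ 2 := by
  have hb : 0 < 1 + 2 * log v := by linarith [one_le_one_add_two_log hv]
  have hlog : 1 + 2 * log v ≤ 2 * v := by linarith [log_le_sub_one_of_pos (by linarith : 0 < v)]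
  rw [fAux_sq _ hv, show (2 : ℝ) * (1 / 2) = 1 by norm_num, rpow_one, mul_div_assoc',
    le_div_iff₀ hb]
  nlinarith

lemma lt_of_fAux_mul_fAux_half_lt {v t : ℝ} (hq : 0 ≤ q) (hu : 1 ≤ u) (hv : 1 ≤ v)
    (h : fAux q u * fAux (1 / 2) v < t) : v < 2 * ((3 + 2 * q) ^ q) ^ 2 * t ^ 2 := by
  have hc : 0 < (3 + 2 * q) ^ q := rpow_pos_of_pos (by linarith) _
  have hf : 1 ≤ (3 + 2 * q) ^ q * fAux q u := by
    rw [← inv_mul_le_iff₀ hc, mul_one, ← rpow_neg (by linarith)]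
    exact rpow_neg_le_fAux hq hu
  have hfg : 0 < fAux q u * fAux (1 / 2) v := mul_pos (fAux_pos q hu) (fAux_pos _ hv)
  calc v ≤ 2 * fAux (1 / 2) v ^ 2 := le_two_mul_fAux_half_sq hv
    _ ≤ 2 * ((3 + 2 * q) ^ q * fAux q u) ^ 2 * fAux (1 / 2) v ^ 2 := by
        gcongr
        nlinarith
    _ = 2 * ((3 + 2 * q) ^ q) ^ 2 * (fAux q u * fAux (1 / 2) v) ^ 2 := by ring
    _ < 2 * ((3 + 2 * q) ^ q) ^ 2 * t ^ 2 := by gcongr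

lemma mul_div_fAux_mul_fAux_half_sq (L : ℝ) {v : ℝ} (hu : 1 ≤ u) (hv : 1 ≤ v) :
    v * L / (fAux q u * fAux (1 / 2) v) ^ 2 =
      (1 + 2 * log u) ^ (2 * q) / u ^ 2 * (L * (1 + 2 * log v) / v) := by
  rw [mul_pow, fAux_sq _ hu, fAux_sq _ hv, show (2 : ℝ) * (1 / 2) = 1 by norm_num, rpow_one]
  have : 0 < (1 + 2 * log u) ^ (2 * q) :=
    rpow_pos_of_pos (by linarith [one_le_one_add_two_log hu]) _
  field_simp

lemma ofReal_ite_le_mul_indicator (n : ℕ) {v t : ℝ} (hq : 0 ≤ q) (hu : 1 ≤ u) (hv : 1 ≤ v) :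
    ENNReal.ofReal (if fAux q u * fAux (1 / 2) v < t then
        v * log (1 + v) ^ n / (fAux q u * fAux (1 / 2) v) ^ 2 else 0) ≤
      ENNReal.ofReal ((1 + 2 * log u) ^ (2 * q) / u ^ 2) *
        (Iio (2 * ((3 + 2 * q) ^ q) ^ 2 * t ^ 2)).indicator
          (fun v => ENNReal.ofReal (log (1 + v) ^ n * (1 + 2 * log v) / v)) v := by
  split_ifs with h
  · have hb : 0 ≤ (1 + 2 * log u) ^ (2 * q) / u ^ 2 :=
      div_nonneg (rpow_nonneg (by linarith [one_le_one_add_two_log hu]) _) (by positivity)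
    rw [indicator_of_mem (mem_Iio.mpr (lt_of_fAux_mul_fAux_half_lt hq hu hv h)),
      ← ENNReal.ofReal_mul hb, mul_div_fAux_mul_fAux_half_sq _ hu hv]
  · simp

end fAux

lemma lintegral_lintegral_le_mul {α β : Type*} [MeasurableSpace α] [MeasurableSpace β]
    {μ : Measure α} {ν : Measure β} {F : α → β → ℝ≥0∞} {f : α → ℝ≥0∞} {g : β → ℝ≥0∞}
    (hf : ∀ x, f x ≠ ∞) (hg : ∫⁻ y, g y ∂ν ≠ ∞) (hF : ∀ᵐ x ∂μ, ∀ᵐ y ∂ν, F x y ≤ f x * g y) :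
    ∫⁻ x, ∫⁻ y, F x y ∂ν ∂μ ≤ (∫⁻ x, f x ∂μ) * ∫⁻ y, g y ∂ν :=
  calc ∫⁻ x, ∫⁻ y, F x y ∂ν ∂μ ≤ ∫⁻ x, ∫⁻ y, f x * g y ∂ν ∂μ :=
        lintegral_mono_ae (hF.mono fun _ hx => lintegral_mono_ae hx)
    _ = ∫⁻ x, f x * ∫⁻ y, g y ∂ν ∂μ :=
        lintegral_congr fun x => lintegral_const_mul' _ _ (hf x)
    _ = (∫⁻ x, f x ∂μ) * ∫⁻ y, g y ∂ν := lintegral_mul_const' _ _ hg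

lemma lintegral_Ioo_ofReal_inv {a b : ℝ} (ha : 0 < a) (hab : a ≤ b) :
    ∫⁻ x in Ioo a b, ENNReal.ofReal x⁻¹ = ENNReal.ofReal (log (b / a)) := by
  have hint : IntervalIntegrable (fun x : ℝ => x⁻¹) volume a b :=
    intervalIntegral.intervalIntegrable_inv
      (fun x hx => by rw [uIcc_of_le hab] at hx; exact (ha.trans_le hx.1).ne') continuousOn_id
  rw [← ofReal_integral_eq_lintegral_ofReal, ← integral_Ioc_eq_integral_Ioo,
    ← intervalIntegral.integral_of_le hab, integral_inv_of_pos ha (ha.trans_le hab)]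
  · exact ((intervalIntegrable_iff_integrableOn_Ioc_of_le hab).mp hint).mono_set
      Ioo_subset_Ioc_self
  · exact (ae_restrict_iff' measurableSet_Ioo).mpr
      (ae_of_all _ fun x hx => inv_nonneg.mpr (ha.trans hx.1).le)

lemma lintegral_Ioi_one_rpow_log_div_sq_le {p : ℝ} (hp : 0 ≤ p) :
    ∫⁻ u in Ioi 1, ENNReal.ofReal ((1 + 2 * log u) ^ p / u ^ 2) ≤
      ENNReal.ofReal (2 * (5 + 4 * p) ^ p) := by
  have hε : 0 < 1 / (2 * (p + 1)) := by positivity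
  have hpt : ∀ u ∈ Ioi (1 : ℝ), ENNReal.ofReal ((1 + 2 * log u) ^ p / u ^ 2) ≤
      ENNReal.ofReal ((5 + 4 * p) ^ p * u ^ (-(3 / 2) : ℝ)) := by
    intro u hu
    have hu0 : 0 < u := lt_trans one_pos hu
    refine ENNReal.ofReal_le_ofReal ?_
    rw [div_le_iff₀ (by positivity)]
    calc (1 + 2 * log u) ^ p ≤ (1 + 2 / (1 / (2 * (p + 1)))) ^ p * u ^ (1 / (2 * (p + 1)) * p) :=
          one_add_two_log_rpow_le hp hε (le_of_lt hu)
      _ ≤ (5 + 4 * p) ^ p * u ^ (1 / 2 : ℝ) := by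
          rw [show 1 + 2 / (1 / (2 * (p + 1))) = 5 + 4 * p by field_simp; ring]
          gcongr
          · exact le_of_lt hu
          · rw [div_mul_eq_mul_div, one_mul, div_le_iff₀ (by positivity)]; linarith
      _ = (5 + 4 * p) ^ p * u ^ (-(3 / 2) : ℝ) * u ^ 2 := by
          rw [mul_assoc, ← rpow_natCast u 2, ← rpow_add hu0]
          norm_num
  calc ∫⁻ u in Ioi 1, ENNReal.ofReal ((1 + 2 * log u) ^ p / u ^ 2)
      ≤ ∫⁻ u in Ioi 1, ENNReal.ofReal ((5 + 4 * p) ^ p * u ^ (-(3 / 2) : ℝ)) :=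
        setLIntegral_mono' measurableSet_Ioi hpt
    _ = ENNReal.ofReal (2 * (5 + 4 * p) ^ p) := by
        rw [← ofReal_integral_eq_lintegral_ofReal
          ((integrableOn_Ioi_rpow_of_lt (by norm_num) one_pos).const_mul _),
          integral_const_mul, integral_Ioi_rpow_of_lt (by norm_num) one_pos, one_rpow]
        · congr 1
          norm_num
          ring
        · exact (ae_restrict_iff' measurableSet_Ioi).mpr
            (ae_of_all _ fun u hu => by have : 0 < u := lt_trans one_pos hu; positivity)

lemma lintegral_Ioo_log_pow_mul_div_le (n : ℕ) {V : ℝ} (hV : 1 ≤ V) :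
    ∫⁻ v in Ioo 1 V, ENNReal.ofReal (log (1 + v) ^ n * (1 + 2 * log v) / v) ≤
      ENNReal.ofReal ((1 + 2 * log (1 + V)) ^ (n + 2)) := by
  set B := 1 + 2 * log (1 + V) with hB_def
  have hlogV : 0 ≤ log (1 + V) := log_nonneg (by linarith)
  have hB : 0 ≤ B := by positivity
  have hpt : ∀ v ∈ Ioo 1 V, ENNReal.ofReal (log (1 + v) ^ n * (1 + 2 * log v) / v) ≤
      ENNReal.ofReal (B ^ (n + 1)) * ENNReal.ofReal v⁻¹ := by
    rintro v ⟨hv1, hvV⟩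
    have hv0 : 0 < v := one_pos.trans hv1
    have hL0 : 0 ≤ log (1 + v) := log_nonneg (by linarith)
    have hLV : log (1 + v) ≤ log (1 + V) := log_le_log (by linarith) (by linarith)
    have hlv : log v ≤ log (1 + v) := log_le_log hv0 (by linarith)
    rw [← ENNReal.ofReal_mul (by positivity), div_eq_mul_inv, pow_succ]
    refine ENNReal.ofReal_le_ofReal (mul_le_mul_of_nonneg_right ?_ (by positivity))
    gcongr
    all_goals linarith [log_nonneg hv1.le]
  calc ∫⁻ v in Ioo 1 V, ENNReal.ofReal (log (1 + v) ^ n * (1 + 2 * log v) / v)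
      ≤ ∫⁻ v in Ioo 1 V, ENNReal.ofReal (B ^ (n + 1)) * ENNReal.ofReal v⁻¹ :=
        setLIntegral_mono' measurableSet_Ioo hpt
    _ = ENNReal.ofReal (B ^ (n + 1)) * ENNReal.ofReal (log V) := by
        rw [lintegral_const_mul' _ _ ENNReal.ofReal_ne_top,
          lintegral_Ioo_ofReal_inv one_pos hV, div_one]
    _ ≤ ENNReal.ofReal (B ^ (n + 1)) * ENNReal.ofReal B := by
        gcongr
        linarith [log_le_log (by linarith : 0 < V) (by linarith : V ≤ 1 + V)]
    _ = ENNReal.ofReal (B ^ (n + 2)) := by rw [← ENNReal.ofReal_mul (by positivity), ← pow_succ]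

lemma one_add_two_log_one_add_mul_sq_le {A t : ℝ} (hA : 0 ≤ A) (ht : 1 ≤ t) :
    1 + 2 * log (1 + A * t ^ 2) ≤ ((1 + 2 * log (1 + A)) / log 2 + 4) * log (1 + t) := by
  have hlog2 : 0 < log 2 := log_pos one_lt_two
  have hlog2t : log 2 ≤ log (1 + t) := log_le_log (by norm_num) (by linarith)
  have hlogA : 0 ≤ log (1 + A) := log_nonneg (by linarith)
  have hsplit : log (1 + A * t ^ 2) ≤ log (1 + A) + 2 * log (1 + t) := by
    rw [show 2 * log (1 + t) = log ((1 + t) ^ 2) by rw [log_pow]; norm_num,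
      ← log_mul (by positivity) (by positivity)]
    exact log_le_log (by positivity) (by nlinarith)
  have hconst : 1 + 2 * log (1 + A) ≤ (1 + 2 * log (1 + A)) / log 2 * log (1 + t) := by
    rw [div_mul_eq_mul_div, le_div_iff₀ hlog2]
    gcongr
  linarith

/-- Let `d ≥ 2`. There is a constant `K > 0` such that for every `t ≥ 1`,
`∫_1^∞ ∫_1^∞ v (log(1+v))^{2(d-1)} / (f_{d/2}(u) f_{1/2}(v))² ·
    1{t > f_{d/2}(u) f_{1/2}(v)} du dv ≤ K (log(1+t))^{2d}`. -/
theorem double_integral_log_bound (d : ℕ) (hd : 2 ≤ d) :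
    ∃ K : ℝ, 0 < K ∧ ∀ t : ℝ, 1 ≤ t →
      (∫⁻ u in Set.Ioi (1 : ℝ), ∫⁻ v in Set.Ioi (1 : ℝ),
        ENNReal.ofReal
          (if fAux ((d : ℝ) / 2) u * fAux (1 / 2) v < t then
            v * Real.log (1 + v) ^ (2 * (d - 1)) /
              (fAux ((d : ℝ) / 2) u * fAux (1 / 2) v) ^ 2
          else 0)) ≤
        ENNReal.ofReal (K * Real.log (1 + t) ^ (2 * d)) := by
  set q : ℝ := (d : ℝ) / 2
  have hq : 0 ≤ q := by positivity
  set c := ((3 + 2 * q) ^ q) ^ 2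
  have hc : 1 ≤ c := one_le_pow₀ (one_le_rpow (by linarith) hq)
  set C := (1 + 2 * log (1 + 2 * c)) / log 2 + 4
  have hC : 0 < C := by
    have := log_nonneg (by linarith : 1 ≤ 1 + 2 * c)
    have := log_pos one_lt_two
    positivity
  refine ⟨2 * (5 + 4 * (2 * q)) ^ (2 * q) * C ^ (2 * d), by positivity, fun t ht => ?_⟩
  have hV : 1 ≤ 2 * c * t ^ 2 := by nlinarith
  have hJ : ∫⁻ v in Ioi 1, (Iio (2 * c * t ^ 2)).indicator
      (fun v => ENNReal.ofReal (log (1 + v) ^ (2 * (d - 1)) * (1 + 2 * log v) / v)) v ≤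
      ENNReal.ofReal ((1 + 2 * log (1 + 2 * c * t ^ 2)) ^ (2 * d)) := by
    rw [lintegral_indicator measurableSet_Iio, Measure.restrict_restrict measurableSet_Iio,
      Iio_inter_Ioi, show 2 * d = 2 * (d - 1) + 2 by omega]
    exact lintegral_Ioo_log_pow_mul_div_le _ hV
  calc _ ≤ (∫⁻ u in Ioi 1, ENNReal.ofReal ((1 + 2 * log u) ^ (2 * q) / u ^ 2)) *
        ∫⁻ v in Ioi 1, (Iio (2 * c * t ^ 2)).indicator
          (fun v => ENNReal.ofReal (log (1 + v) ^ (2 * (d - 1)) * (1 + 2 * log v) / v)) v := by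
        refine lintegral_lintegral_le_mul (fun _ => ENNReal.ofReal_ne_top)
          (ne_top_of_le_ne_top ENNReal.ofReal_ne_top hJ) ?_
        filter_upwards [ae_restrict_mem measurableSet_Ioi] with u hu
        filter_upwards [ae_restrict_mem measurableSet_Ioi] with v hv
        exact ofReal_ite_le_mul_indicator _ hq (le_of_lt hu) (le_of_lt hv)
    _ ≤ ENNReal.ofReal (2 * (5 + 4 * (2 * q)) ^ (2 * q)) *
          ENNReal.ofReal ((1 + 2 * log (1 + 2 * c * t ^ 2)) ^ (2 * d)) :=
        mul_le_mul' (lintegral_Ioi_one_rpow_log_div_sq_le (by positivity)) hJ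
    _ ≤ _ := by
        rw [← ENNReal.ofReal_mul (by positivity), mul_assoc _ (C ^ _), ← mul_pow]
        gcongr
        · exact zero_le_one.trans (one_le_one_add_two_log (by linarith))
        · exact one_add_two_log_one_add_mul_sq_le (by positivity) ht
end

section
/- Let γ > 0 and p ≥ 0. Then there exists a constant K > 0, depending only on γ and p, such that for every z ≥ 1, ∫_1^∞ exp( −(z u)^γ ) u ( log(1+u) )^{p} du ≤ K exp( −z^γ ). -/
/-!
For `z, u ≥ 1` we have `(z u)^γ = z^γ u^γ ≥ z^γ + u^γ - 1`, because `(z^γ - 1)(u^γ - 1) ≥ 0`.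
Hence `exp(-(z u)^γ) ≤ e · exp(-z^γ) · exp(-u^γ)`, and with `log (1 + u) ≤ u` the integrand is
at most `e · exp(-z^γ) · u^(p+1) exp(-u^γ)`, whose integral over `(1, ∞)` is a finite
Gamma-type integral independent of `z`.
-/

open Real MeasureTheory Set

theorem MeasureTheory.setLIntegral_ofReal_le_const_mul_setIntegral {α : Type*}
    [MeasurableSpace α] {μ : Measure α} {s : Set α} {f g : α → ℝ} {c : ℝ}
    (hs : MeasurableSet s) (hg : IntegrableOn g s μ) (hg_nonneg : ∀ x ∈ s, 0 ≤ g x)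
    (hc : 0 ≤ c) (hfg : ∀ x ∈ s, f x ≤ c * g x) :
    ∫⁻ x in s, ENNReal.ofReal (f x) ∂μ ≤ ENNReal.ofReal (c * ∫ x in s, g x ∂μ) :=
  calc ∫⁻ x in s, ENNReal.ofReal (f x) ∂μ
      ≤ ∫⁻ x in s, ENNReal.ofReal (c * g x) ∂μ :=
        setLIntegral_mono' hs fun x hx => ENNReal.ofReal_le_ofReal (hfg x hx)
    _ = ENNReal.ofReal (∫ x in s, c * g x ∂μ) :=
        (ofReal_integral_eq_lintegral_ofReal (hg.const_mul c)
          (ae_restrict_of_forall_mem hs fun x hx => mul_nonneg hc (hg_nonneg x hx))).symm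
    _ = ENNReal.ofReal (c * ∫ x in s, g x ∂μ) := by rw [integral_const_mul]

theorem Real.exp_neg_mul_rpow_le {γ z u : ℝ} (hγ : 0 ≤ γ) (hz : 1 ≤ z) (hu : 1 ≤ u) :
    exp (-((z * u) ^ γ)) ≤ exp 1 * exp (-(z ^ γ)) * exp (-(u ^ γ)) := by
  have hzγ : 1 ≤ z ^ γ := one_le_rpow hz hγ
  have huγ : 1 ≤ u ^ γ := one_le_rpow hu hγ
  rw [← exp_add, ← exp_add, exp_le_exp, mul_rpow (by linarith) (by linarith)]
  nlinarith

theorem Real.mul_log_one_add_rpow_le {u p : ℝ} (hu : 0 ≤ u) (hp : 0 ≤ p) :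
    u * log (1 + u) ^ p ≤ u ^ (p + 1) := by
  have hlog : log (1 + u) ≤ u := by
    linarith [log_le_sub_one_of_pos (by linarith : (0 : ℝ) < 1 + u)]
  rw [rpow_add_one' hu (by linarith), mul_comm]
  exact mul_le_mul_of_nonneg_right (rpow_le_rpow (log_nonneg (by linarith)) hlog hp) hu

theorem Real.exp_neg_mul_rpow_mul_log_le {γ p z u : ℝ} (hγ : 0 ≤ γ) (hp : 0 ≤ p) (hz : 1 ≤ z)
    (hu : 1 ≤ u) :
    exp (-((z * u) ^ γ)) * u * log (1 + u) ^ p ≤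
      exp 1 * exp (-(z ^ γ)) * exp (-(u ^ γ)) * u ^ (p + 1) := by
  rw [mul_assoc _ u]
  exact mul_le_mul (exp_neg_mul_rpow_le hγ hz hu) (mul_log_one_add_rpow_le (by linarith) hp)
    (mul_nonneg (by linarith) (rpow_nonneg (log_nonneg (by linarith)) p)) (by positivity)

/-- Let `γ > 0` and `p ≥ 0`. There is a constant `K > 0`, depending only on `γ`
and `p`, such that for every `z ≥ 1`,
`∫_1^∞ exp(-(z u)^γ) u (log(1+u))^p du ≤ K exp(-z^γ)`. -/
theorem integral_exp_stretched_bound (γ p : ℝ) (hγ : 0 < γ) (hp : 0 ≤ p) :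
    ∃ K : ℝ, 0 < K ∧ ∀ z : ℝ, 1 ≤ z →
      (∫⁻ u in Set.Ioi (1 : ℝ),
          ENNReal.ofReal (Real.exp (-((z * u) ^ γ)) * u * Real.log (1 + u) ^ p)) ≤
        ENNReal.ofReal (K * Real.exp (-(z ^ γ))) := by
  set g : ℝ → ℝ := fun u => u ^ (p + 1) * exp (-u ^ γ)
  have hg : IntegrableOn g (Ioi 1) :=
    (integrableOn_rpow_mul_exp_neg_rpow (by linarith) hγ).mono_set (Ioi_subset_Ioi zero_le_one)
  have hg_nonneg : ∀ u ∈ Ioi (1 : ℝ), 0 ≤ g u := fun u hu =>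
    mul_nonneg (rpow_nonneg (zero_le_one.trans (le_of_lt hu)) _) (exp_pos _).le
  set K₀ := ∫ u in Ioi 1, g u
  have hK₀ : 0 ≤ K₀ := setIntegral_nonneg measurableSet_Ioi hg_nonneg
  refine ⟨exp 1 * (K₀ + 1), by positivity, fun z hz => ?_⟩
  calc _ ≤ ENNReal.ofReal (exp 1 * exp (-(z ^ γ)) * K₀) := by
        refine setLIntegral_ofReal_le_const_mul_setIntegral measurableSet_Ioi hg hg_nonneg
          (by positivity) fun u (hu : 1 < u) => ?_
        exact (exp_neg_mul_rpow_mul_log_le hγ.le hp hz hu.le).trans_eq (by ring)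
    _ ≤ ENNReal.ofReal (exp 1 * (K₀ + 1) * exp (-(z ^ γ))) :=
        ENNReal.ofReal_le_ofReal (by nlinarith [exp_pos 1, exp_pos (-(z ^ γ))])
end
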